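/- Let n ≥ 3, let c ∈ ℤ^n satisfy c_1 ≥ c_2 ≥ ⋯ ≥ c_n ≥ 0, and let k be an integer with 0 ≤ k ≤ ℓ. Define u₁ = S^(k,k+1)(−m_k) (the vector obtained from −m_k by swapping its k-th and (k+1)-th entries; applicable when k ≥ 1) and u₂ = A^(n)(−m_k) (the vector obtained from −m_k by changing its last entry from −1 to 1; applicable when 2k + 1 < n). Suppose m_k·c ≥ 0, that m_k·c ≤ u₁·c whenever k ≥ 1, and that m_k·c ≤ u₂·c whenever 2k + 1 < n. Then m_k·c ≤ |p(S)·c| for every subset S of {1,…,n} with p(S) ∈ Q(n); thus the subset S₀ with p(S₀) = m_k is an optimal solution among the candidates and the optimal value is m_k·c. -/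
import Mathlib


open Finset

/-- Cumulative sum: `x 0 + ... + x k`. -/
def cum {n : ℕ} (x : Fin n → ℤ) (k : Fin n) : ℤ := ∑ i ∈ Finset.Iic k, x i

/-- The partial order `⪯`: every partial sum of `x` is at most that of `y`. -/
def ple {n : ℕ} (x y : Fin n → ℤ) : Prop := ∀ k : Fin n, cum x k ≤ cum y k

/-- Membership in `P(n)`: all entries are `1` or `-1`. -/
def isPM {n : ℕ} (v : Fin n → ℤ) : Prop := ∀ i, v i = 1 ∨ v i = -1

/-- Membership in `Q(n)`. -/
def inQ {n : ℕ} (v : Fin n → ℤ) : Prop := isPM v ∧ ¬ ple v 0 ∧ ¬ ple 0 v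

/-- Standard inner product on `ℤ^n`. -/
def dotp {n : ℕ} (x y : Fin n → ℤ) : ℤ := ∑ i, x i * y i

/-- The ±1 vector of a subset `S`. -/
def pS {n : ℕ} (S : Finset (Fin n)) : Fin n → ℤ := fun i => if i ∈ S then 1 else -1

/-- The vector `m_k`: first `k` entries 1, next `k+1` entries −1, rest 1 (0-indexed). -/
def mvec (n k : ℕ) : Fin n → ℤ := fun i => if i.val < k then 1 else if i.val < 2 * k + 1 then -1 else 1

/-- An instance of the partition problem: `c_1 ≥ c_2 ≥ ⋯ ≥ c_n ≥ 0`. -/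
def monoc {n : ℕ} (c : Fin n → ℤ) : Prop := (∀ i j : Fin n, i ≤ j → c j ≤ c i) ∧ ∀ i, 0 ≤ c i

namespace Aux19

def pad {n : ℕ} (v : Fin n → ℤ) : ℕ → ℤ := fun i => if h : i < n then v ⟨i, h⟩ else 0

def psum {n : ℕ} (v : Fin n → ℤ) (t : ℕ) : ℤ := ∑ i ∈ Finset.range t, pad v i

variable {n : ℕ}

lemma psum_zero (v : Fin n → ℤ) : psum v 0 = 0 := by simp [psum]

lemma psum_succ (v : Fin n → ℤ) (t : ℕ) : psum v (t + 1) = psum v t + pad v t :=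
  Finset.sum_range_succ _ _

lemma pad_lt (v : Fin n → ℤ) {t : ℕ} (h : t < n) : pad v t = v ⟨t, h⟩ := by simp [pad, h]

lemma cum_eq (v : Fin n → ℤ) (r : Fin n) : cum v r = psum v (r.val + 1) := by
  obtain ⟨t, ht⟩ := r
  induction t with
  | zero =>
    have : Finset.Iic (⟨0, ht⟩ : Fin n) = {⟨0, ht⟩} := by
      ext i; simp [Fin.le_def, Fin.ext_iff, Nat.le_zero]
    simp [cum, this, psum_succ, psum_zero, pad_lt v ht]
  | succ t ih =>
    have ht' : t < n := by omega
    have hins : Finset.Iic (⟨t+1, ht⟩ : Fin n) = insert ⟨t+1, ht⟩ (Finset.Iic ⟨t, ht'⟩) := by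
      ext i; simp [Fin.le_def, Fin.ext_iff]; omega
    have hnm : (⟨t+1, ht⟩ : Fin n) ∉ Finset.Iic (⟨t, ht'⟩ : Fin n) := by
      simp [Fin.le_def]
    rw [cum, hins, Finset.sum_insert hnm, psum_succ, pad_lt v ht]
    have := ih ht'
    rw [cum] at this
    rw [this]; ring

lemma ple_of (x y : Fin n → ℤ) (h : ∀ t, 0 < t → t ≤ n → psum x t ≤ psum y t) : ple x y := by
  intro r
  rw [cum_eq, cum_eq]
  exact h (r.val + 1) (by omega) r.isLt

-- generic Abel summation over ℕ
lemma abel_nat (f g : ℕ → ℤ) (t : ℕ) :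
    ∑ i ∈ Finset.range t, f i * g i =
      (∑ i ∈ Finset.range t, (∑ j ∈ Finset.range (i+1), f j) * (g i - g (i+1)))
        + (∑ i ∈ Finset.range t, f i) * g t := by
  induction t with
  | zero => simp
  | succ t ih =>
    rw [Finset.sum_range_succ (fun i => f i * g i), ih,
      Finset.sum_range_succ (fun i => (∑ j ∈ Finset.range (i+1), f j) * (g i - g (i+1))),
      Finset.sum_range_succ f]
    ring

lemma dotp_eq_range (x c : Fin n → ℤ) :
    dotp x c = ∑ i ∈ Finset.range n, pad x i * pad c i := by
  rw [dotp, ← Fin.sum_univ_eq_sum_range (fun i => pad x i * pad c i) n]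
  apply Finset.sum_congr rfl
  intro i _
  rw [pad_lt x i.isLt, pad_lt c i.isLt]

lemma abel (x c : Fin n → ℤ) :
    dotp x c = ∑ i ∈ Finset.range n, psum x (i+1) * (pad c i - pad c (i+1)) := by
  rw [dotp_eq_range, abel_nat]
  have : pad c n = 0 := by simp [pad]
  rw [this, mul_zero, add_zero]
  rfl

lemma dot_mono {c : Fin n → ℤ} (hc : monoc c) {x y : Fin n → ℤ}
    (h : ple x y) : dotp x c ≤ dotp y c := by
  rw [abel, abel]
  apply Finset.sum_le_sum
  intro i hi
  have hin : i < n := Finset.mem_range.mp hi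
  have h1 : psum x (i+1) ≤ psum y (i+1) := by
    have := h ⟨i, hin⟩
    rwa [cum_eq, cum_eq] at this
  have h2 : 0 ≤ pad c i - pad c (i+1) := by
    by_cases hi1 : i + 1 < n
    · rw [pad_lt c hin, pad_lt c hi1]
      have := hc.1 ⟨i, hin⟩ ⟨i+1, hi1⟩ (by simp [Fin.le_def])
      omega
    · have : pad c (i+1) = 0 := by simp [pad, hi1]
      rw [this, pad_lt c hin, sub_zero]
      exact hc.2 _
  exact mul_le_mul_of_nonneg_right h1 h2

lemma lip {v : Fin n → ℤ} (hv : isPM v) {s t : ℕ} (hst : s ≤ t) (htn : t ≤ n) :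
    psum v t - psum v s ≤ (t : ℤ) - s ∧ psum v s - psum v t ≤ (t : ℤ) - s := by
  induction t, hst using Nat.le_induction with
  | base => simp
  | succ t hst ih =>
    have h1 := ih (by omega)
    rw [psum_succ, pad_lt v (show t < n by omega)]
    rcases hv ⟨t, by omega⟩ with h | h <;> rw [h] <;> push_cast <;> omega

lemma lipb {v : Fin n → ℤ} (hv : isPM v) (s t : ℕ) (hsn : s ≤ n) (htn : t ≤ n) :
    psum v t - psum v s ≤ (max s t : ℤ) - min s t ∧
    psum v s - psum v t ≤ (max s t : ℤ) - min s t := by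
  rcases le_total s t with h | h
  · have := lip hv h htn
    omega
  · have := lip hv h hsn
    omega

lemma par {v : Fin n → ℤ} (hv : isPM v) (t : ℕ) (htn : t ≤ n) :
    (2 : ℤ) ∣ psum v t + t := by
  induction t with
  | zero => simp [psum_zero]
  | succ t ih =>
    have h1 := ih (by omega)
    rw [psum_succ, pad_lt v (show t < n by omega)]
    rcases hv ⟨t, by omega⟩ with h | h <;> rw [h] <;> push_cast <;> omega

lemma psum_neg (v : Fin n → ℤ) (t : ℕ) : psum (-v) t = - psum v t := by
  rw [psum, psum, ← Finset.sum_neg_distrib]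
  apply Finset.sum_congr rfl
  intro i _
  by_cases h : i < n <;> simp [pad, h]

lemma psum_update (f : Fin n → ℤ) (j : Fin n) (a : ℤ) (t : ℕ) :
    psum (Function.update f j a) t = psum f t + (if (j : ℕ) < t then a - f j else 0) := by
  induction t with
  | zero => simp [psum_zero]
  | succ t ih =>
    rw [psum_succ, psum_succ, ih]
    by_cases ht : t < n
    · rw [pad_lt _ ht, pad_lt f ht]
      by_cases hj : t = (j : ℕ)
      · have : (⟨t, ht⟩ : Fin n) = j := by simp [Fin.ext_iff, hj]
        rw [this, Function.update_self]
        have h1 : ¬ ((j:ℕ) < t) := by omega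
        have h2 : (j:ℕ) < t + 1 := by omega
        simp [h1, h2]
        try ring
      · have : (⟨t, ht⟩ : Fin n) ≠ j := by simp [Fin.ext_iff, hj]
        rw [Function.update_of_ne this]
        have : ((j:ℕ) < t) ↔ ((j:ℕ) < t + 1) := by
          constructor <;> intro <;> omega
        by_cases hjt : (j:ℕ) < t
        · simp [hjt, this.mp hjt]
          try ring
        · have : ¬ ((j:ℕ) < t + 1) := by omega
          simp [hjt, this]
          try ring
    · have h1 : pad (Function.update f j a) t = 0 := by simp [pad, ht]
      have h2 : pad f t = 0 := by simp [pad, ht]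
      have h3 : ((j:ℕ) < t) ↔ ((j:ℕ) < t + 1) := by
        have := j.isLt; constructor <;> intro <;> omega
      rw [h1, h2]
      by_cases hjt : (j:ℕ) < t
      · simp [hjt, h3.mp hjt]
      · have : ¬ ((j:ℕ) < t + 1) := by omega
        simp [hjt, this]

lemma psum_mvec {k : ℕ} (hkn : 2*k+1 ≤ n) :
    ∀ t, t ≤ n → psum (mvec n k) t = 2 * min (t:ℤ) k - 2 * min (t:ℤ) (2*k+1) + t := by
  intro t
  induction t with
  | zero => intro; simp [psum_zero]; omega
  | succ t ih =>
    intro htn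
    have ht : t < n := by omega
    rw [psum_succ, pad_lt _ ht, ih (by omega)]
    unfold mvec
    simp only []
    by_cases h1 : t < k
    · rw [if_pos h1]; push_cast; omega
    · rw [if_neg h1]
      by_cases h2 : t < 2*k+1
      · rw [if_pos h2]; push_cast; omega
      · rw [if_neg h2]; push_cast; omega

lemma dom_m {k : ℕ} (hkn : 2*k+1 ≤ n) (v : Fin n → ℤ) (hv : isPM v)
    (ha : psum v k = k) (hb : (n:ℤ) - 2*k - 2 ≤ psum v n) : ple (mvec n k) v := by
  apply ple_of
  intro t ht htn
  rw [psum_mvec hkn t htn]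
  have hz := psum_zero v
  have l1 := lipb hv t k htn (by omega)
  have l2 := lipb hv t n htn le_rfl
  have l0 := lipb hv t 0 htn (by omega)
  omega

lemma dom_u1 {k : ℕ} (hk1 : 1 ≤ k) (hkn : 2*k+1 ≤ n) (v : Fin n → ℤ) (hv : isPM v)
    (ha : 2 - (k:ℤ) ≤ psum v k) (hb : 1 ≤ psum v (2*k+1)) :
    ple (Function.update (Function.update (-(mvec n k)) ⟨k - 1, by omega⟩ 1)
          ⟨k, by omega⟩ (-1)) v := by
  apply ple_of
  intro t ht htn
  rw [psum_update, psum_update, psum_neg, psum_mvec hkn t htn]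
  have e1 : (-(mvec n k)) (⟨k - 1, by omega⟩ : Fin n) = -1 := by
    have h1 : k - 1 < k := by omega
    simp [mvec, h1]
  have e2 : (Function.update (-(mvec n k)) (⟨k - 1, by omega⟩ : Fin n) 1)
      (⟨k, by omega⟩ : Fin n) = 1 := by
    rw [Function.update_of_ne (by simp [Fin.ext_iff]; omega)]
    have h1 : ¬ (k < k) := by omega
    have h2 : k < 2*k+1 := by omega
    simp [mvec, h1, h2]
  rw [e1, e2]
  simp only [Fin.val_mk]
  have hz := psum_zero v
  have l1 := lipb hv t k htn (by omega)
  have l2 := lipb hv t (2*k+1) htn hkn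
  have l0 := lipb hv t 0 htn (by omega)
  split_ifs <;> omega

lemma dom_u2 {k : ℕ} (hkn : 2*k+1 < n) (v : Fin n → ℤ) (hv : isPM v)
    (hb : 1 ≤ psum v (2*k+1)) (hd : 2*(k:ℤ) + 4 - n ≤ psum v n) :
    ple (Function.update (-(mvec n k)) ⟨n - 1, by omega⟩ 1) v := by
  apply ple_of
  intro t ht htn
  rw [psum_update, psum_neg, psum_mvec (by omega) t htn]
  have e1 : (-(mvec n k)) (⟨n - 1, by omega⟩ : Fin n) = -1 := by
    have h1 : ¬ (n - 1 < k) := by omega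
    have h2 : ¬ (n - 1 < 2*k+1) := by omega
    simp [mvec, h1, h2]
  rw [e1]
  simp only [Fin.val_mk]
  have hz := psum_zero v
  have l2 := lipb hv t (2*k+1) htn (by omega)
  have l3 := lipb hv t n htn le_rfl
  have l0 := lipb hv t 0 htn (by omega)
  split_ifs <;> omega

lemma dotp_neg (x c : Fin n → ℤ) : dotp (-x) c = - dotp x c := by
  simp [dotp, Finset.sum_neg_distrib]

end Aux19

open Aux19

theorem stmt19 {n : ℕ} (hn : 3 ≤ n) (c : Fin n → ℤ) (hc : monoc c)
    (k : ℕ) (hk : k ≤ (n - 1) / 2)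
    (u₁ u₂ : Fin n → ℤ)
    (hu₁ : 1 ≤ k →
      u₁ = Function.update (Function.update (-(mvec n k)) ⟨k - 1, by omega⟩ 1)
              ⟨k, by omega⟩ (-1))
    (hu₂ : 2 * k + 1 < n → u₂ = Function.update (-(mvec n k)) ⟨n - 1, by omega⟩ 1)
    (h0 : 0 ≤ dotp (mvec n k) c)
    (h1 : 1 ≤ k → dotp (mvec n k) c ≤ dotp u₁ c)
    (h2 : 2 * k + 1 < n → dotp (mvec n k) c ≤ dotp u₂ c) :
    ∀ S : Finset (Fin n), inQ (pS S) → dotp (mvec n k) c ≤ |dotp (pS S) c| := by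
  intro S _
  have hpm : isPM (pS S) := by
    intro i; unfold pS; by_cases h : i ∈ S <;> simp [h]
  have hmn : isPM (-(pS S)) := by
    intro i; rcases hpm i with h | h <;> simp [h]
  have hk2 : 2*k+1 ≤ n := by omega
  have hz : psum (pS S) 0 = 0 := psum_zero _
  have pb := par hpm (2*k+1) hk2
  have pk := par hpm k (by omega)
  have pn := par hpm n le_rfl
  have lab := lipb hpm k (2*k+1) (by omega) hk2
  have lbn := lipb hpm (2*k+1) n hk2 le_rfl
  have lkn := lipb hpm k n (by omega) le_rfl
  have l0k := lipb hpm 0 k (by omega) (by omega)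
  have l0n := lipb hpm 0 n (by omega) le_rfl
  have W1 : ∀ w : Fin n → ℤ, ple w (pS S) → dotp w c ≤ |dotp (pS S) c| :=
    fun w hw => (dot_mono hc hw).trans (le_abs_self _)
  have W2 : ∀ w : Fin n → ℤ, ple w (-(pS S)) → dotp w c ≤ |dotp (pS S) c| :=
    fun w hw => (dot_mono hc hw).trans (by rw [dotp_neg]; exact neg_le_abs _)
  rcases (show 1 ≤ psum (pS S) (2*k+1) ∨ psum (pS S) (2*k+1) ≤ -1 by omega) with hb | hb
  · by_cases hk1 : 1 ≤ k
    · by_cases hca : 2 - (k:ℤ) ≤ psum (pS S) k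
      · refine le_trans (h1 hk1) ?_
        rw [hu₁ hk1]
        exact W1 _ (dom_u1 hk1 hk2 _ hpm hca hb)
      · have ha : psum (pS S) k = -(k:ℤ) := by omega
        by_cases hd : psum (pS S) n ≤ 2*(k:ℤ) + 2 - n
        · refine W2 _ (dom_m hk2 _ hmn ?_ ?_)
          · rw [psum_neg]; omega
          · rw [psum_neg]; omega
        · have h2k : 2*k+1 < n := by
            by_contra hcon
            have he : 2*k+1 = n := by omega
            rw [he] at hb lab
            omega
          refine le_trans (h2 h2k) ?_
          rw [hu₂ h2k]
          exact W1 _ (dom_u2 h2k _ hpm hb (by omega))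
    · have hk0 : k = 0 := by omega
      subst hk0
      by_cases hd1 : (n:ℤ) - 2*(0:ℤ) - 2 ≤ psum (pS S) n
      · exact W1 _ (dom_m hk2 _ hpm (by simpa using hz) (by omega))
      · by_cases hd2 : 2*((0:ℕ):ℤ) + 4 - n ≤ psum (pS S) n
        · have h2k : 2*0+1 < n := by omega
          refine le_trans (h2 h2k) ?_
          rw [hu₂ h2k]
          exact W1 _ (dom_u2 h2k _ hpm hb hd2)
        · refine W2 _ (dom_m hk2 _ hmn (by simp [psum_neg, hz]) ?_)
          rw [psum_neg]; omega
  · by_cases hk1 : 1 ≤ k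
    · by_cases hca : psum (pS S) k ≤ (k:ℤ) - 2
      · refine le_trans (h1 hk1) ?_
        rw [hu₁ hk1]
        refine W2 _ (dom_u1 hk1 hk2 _ hmn ?_ ?_)
        · rw [psum_neg]; omega
        · rw [psum_neg]; omega
      · have ha : psum (pS S) k = (k:ℤ) := by omega
        by_cases hd : (n:ℤ) - 2*k - 2 ≤ psum (pS S) n
        · exact W1 _ (dom_m hk2 _ hpm ha hd)
        · have h2k : 2*k+1 < n := by
            by_contra hcon
            have he : 2*k+1 = n := by omega
            rw [he] at hb lab
            omega
          refine le_trans (h2 h2k) ?_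
          rw [hu₂ h2k]
          refine W2 _ (dom_u2 h2k _ hmn ?_ ?_)
          · rw [psum_neg]; omega
          · rw [psum_neg]; omega
    · have hk0 : k = 0 := by omega
      subst hk0
      by_cases hd1 : psum (pS S) n ≤ 2*((0:ℕ):ℤ) + 2 - n
      · refine W2 _ (dom_m hk2 _ hmn (by simp [psum_neg, hz]) ?_)
        rw [psum_neg]; omega
      · by_cases hd2 : psum (pS S) n ≤ (n:ℤ) - 2*(0:ℤ) - 4
        · have h2k : 2*0+1 < n := by omega
          refine le_trans (h2 h2k) ?_
          rw [hu₂ h2k]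
          refine W2 _ (dom_u2 h2k _ hmn ?_ ?_)
          · rw [psum_neg]; omega
          · rw [psum_neg]; omega
        · exact W1 _ (dom_m hk2 _ hpm (by simpa using hz) (by omega))
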